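/- Let M be a separable metrizable space and let X, Y ⊆ M be disjoint sets with M = X ∪ Y. Let M(X) denote M with the topology generated by the open sets of M together with the singletons {x} for x ∈ X, and give M(X) × M(X) the product topology. Then the subset M₂ = (X × Y) ∪ (Y × X) ∪ {(x,x) : x ∈ X}, with the subspace topology inherited from M(X) × M(X), is metrizable. -/

import Mathlib

/-!
Every point of `M₂` has a coordinate in `X`, and near each point of `M₂` it is the same coordinate
that lies in `X`: near `(x, y)` the first coordinate is frozen at `x`, and near `(y, x)` the second
one is frozen at `x` while the first one differs from `x`, hence lies in `Y`. So `M₂` keeps its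
topology when `M(X)` is refined further by making `Y` clopen. The refined space is the sum of the
discrete space `X` and the subspace `Y` of `M`; it embeds into `M × Option M`, the second factor
discrete, by `z ↦ (z, some z)` on `X` and `z ↦ (z, none)` on `Y`. So it is metrizable, and so is
`M₂` as a subspace of its square.
-/

open Topology

/-- The Michael-line-like topology `M(X)`: the topology generated by the open
sets of `M` together with the singletons `{x}` for `x ∈ X`. -/
def michael {M : Type*} (t : TopologicalSpace M) (X : Set M) : TopologicalSpace M :=
  TopologicalSpace.generateFrom ({U | IsOpen[t] U} ∪ {S | ∃ x ∈ X, S = {x}})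

open Set TopologicalSpace

section Tag

variable {N : Type*} {X : Set N}

open Classical in
noncomputable def xTag (X : Set N) (z : N) : WithDiscreteTopology (Option N) :=
  WithTopology.toTopology ⊥ (if z ∈ X then some z else none)

theorem xTag_preimage_none : xTag X ⁻¹' {WithTopology.toTopology ⊥ none} = Xᶜ := by
  ext z
  simp [xTag]

theorem xTag_preimage_some (x : N) :
    xTag X ⁻¹' {WithTopology.toTopology ⊥ (some x)} = X ∩ {x} := by
  ext z
  simp [xTag, and_comm]

theorem xTag_preimage_some_of_mem {x : N} (hx : x ∈ X) :
    xTag X ⁻¹' {WithTopology.toTopology ⊥ (some x)} = {x} := by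
  rw [xTag_preimage_some, inter_eq_right.2 (singleton_subset_iff.2 hx)]

theorem continuous_xTag_comp [TopologicalSpace N] {A : Type*} [TopologicalSpace A]
    (hX : ∀ x ∈ X, IsOpen ({x} : Set N)) {f : A → N} (hf : Continuous f)
    (hfX : IsOpen (f ⁻¹' Xᶜ)) : Continuous fun a => xTag X (f a) := by
  refine continuous_discrete_rng.2 fun b => ?_
  change IsOpen (f ⁻¹' (xTag X ⁻¹' {b}))
  rcases b with ⟨_ | x⟩
  · rwa [xTag_preimage_none]
  · by_cases hx : x ∈ X
    · rw [xTag_preimage_some_of_mem hx]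
      exact (hX x hx).preimage hf
    · rw [xTag_preimage_some, inter_singleton_eq_empty.2 hx, preimage_empty]
      exact isOpen_empty

end Tag

section Square

variable {N : Type*} {X : Set N}

def michaelSquare (X Y : Set N) : Set (N × N) := X ×ˢ Y ∪ Y ×ˢ X ∪ {p | p.1 ∈ X ∧ p.1 = p.2}

theorem fst_notMem_iff_of_mem_michaelSquare {p : N × N} (hp : p ∈ michaelSquare X Xᶜ) :
    p.1 ∉ X ↔ p.2 ∈ X ∧ p.1 ≠ p.2 := by
  rcases hp with (⟨h1, h2⟩ | ⟨h1, h2⟩) | ⟨h1, h2⟩ <;> grind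

theorem snd_notMem_iff_of_mem_michaelSquare {p : N × N} (hp : p ∈ michaelSquare X Xᶜ) :
    p.2 ∉ X ↔ p.1 ∈ X ∧ p.1 ≠ p.2 := by
  rcases hp with (⟨h1, h2⟩ | ⟨h1, h2⟩) | ⟨h1, h2⟩ <;> grind

variable [TopologicalSpace N] [T2Space N]

theorem isOpen_michaelSquare_fst_notMem (hX : ∀ x ∈ X, IsOpen ({x} : Set N)) :
    IsOpen {q : michaelSquare X Xᶜ | q.1.1 ∉ X} := by
  simp_rw [fst_notMem_iff_of_mem_michaelSquare (Subtype.prop _)]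
  exact ((biUnion_of_singleton X ▸ isOpen_biUnion hX).preimage (by fun_prop)).inter
    (isOpen_ne_fun (by fun_prop) (by fun_prop))

theorem isOpen_michaelSquare_snd_notMem (hX : ∀ x ∈ X, IsOpen ({x} : Set N)) :
    IsOpen {q : michaelSquare X Xᶜ | q.1.2 ∉ X} := by
  simp_rw [snd_notMem_iff_of_mem_michaelSquare (Subtype.prop _)]
  exact ((biUnion_of_singleton X ▸ isOpen_biUnion hX).preimage (by fun_prop)).inter
    (isOpen_ne_fun (by fun_prop) (by fun_prop))

end Square

section Split

variable {N : Type*} [TopologicalSpace N] {X : Set N}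

/-- `N` with the points of `X` isolated and `Xᶜ` clopen: the sum of the discrete space `X` and
the subspace `Xᶜ`. -/
noncomputable def splitTopology (t : TopologicalSpace N) (X : Set N) : TopologicalSpace N :=
  t ⊓ induced (xTag X) inferInstance

theorem splitTopology_eq_induced :
    splitTopology ‹_› X = induced (fun z => (z, xTag X z)) inferInstance := by
  rw [instTopologicalSpaceProd, induced_inf, induced_compose, induced_compose]
  exact congrArg₂ (· ⊓ ·) induced_id.symm rfl

theorem metrizableSpace_splitTopology [MetrizableSpace N] :
    @MetrizableSpace N (splitTopology ‹_› X) :=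
  splitTopology_eq_induced (X := X) ▸
    @IsEmbedding.metrizableSpace N _ (induced _ _) _ _ _
      (IsEmbedding.induced fun _ _ h => congrArg Prod.fst h)

theorem induced_splitTopology_michaelSquare [T2Space N] (hX : ∀ x ∈ X, IsOpen ({x} : Set N)) :
    induced ((↑) : michaelSquare X Xᶜ → N × N)
      (@instTopologicalSpaceProd N N (splitTopology ‹_› X) (splitTopology ‹_› X)) =
        instTopologicalSpaceSubtype := by
  refine le_antisymm
    (induced_mono (inf_le_inf (induced_mono inf_le_left) (induced_mono inf_le_left))) ?_
  simp only [instTopologicalSpaceProd, splitTopology, induced_inf, induced_compose]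
  refine le_inf (le_inf ?_ ?_) (le_inf ?_ ?_) <;> rw [← continuous_iff_le_induced]
  · fun_prop
  · exact continuous_xTag_comp hX (by fun_prop) (isOpen_michaelSquare_fst_notMem hX)
  · fun_prop
  · exact continuous_xTag_comp hX (by fun_prop) (isOpen_michaelSquare_snd_notMem hX)

end Split

section Michael

variable {M : Type*} [t : TopologicalSpace M] (X : Set M)

theorem michael_le : michael t X ≤ t := fun _ hU => isOpen_generateFrom_of_mem (Or.inl hU)

theorem isOpen_michael_singleton {x : M} (hx : x ∈ X) : IsOpen[michael t X] {x} :=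
  isOpen_generateFrom_of_mem (Or.inr ⟨x, hx, rfl⟩)

theorem splitTopology_michael : splitTopology (michael t X) X = splitTopology t X := by
  refine le_antisymm (inf_le_inf_right _ (michael_le X))
    (le_inf (le_generateFrom ?_) inf_le_right)
  rintro s (hs | ⟨x, hx, rfl⟩)
  · exact (inf_le_left : splitTopology t X ≤ t) s hs
  · exact (inf_le_right : splitTopology t X ≤ _) _
      (xTag_preimage_some_of_mem hx ▸ isOpen_induced (isOpen_discrete _))

theorem metrizableSpace_michaelSquare [MetrizableSpace M] :
    @MetrizableSpace (michaelSquare X Xᶜ)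
      (@instTopologicalSpaceSubtype _ _
        (@instTopologicalSpaceProd M M (michael t X) (michael t X))) := by
  have : @T2Space M (michael t X) := t2Space_antitone (michael_le X) inferInstance
  rw [← @induced_splitTopology_michaelSquare M (michael t X) X this
    (fun _ hx => isOpen_michael_singleton X hx), splitTopology_michael]
  have hsplit := metrizableSpace_splitTopology (X := X)
  exact @MetrizableSpace.subtype _
    (@instTopologicalSpaceProd M M (splitTopology t X) (splitTopology t X))
    (@metrizableSpace_prod M M (splitTopology t X) (splitTopology t X) hsplit hsplit) _

end Michael

theorem stmt13_general {M : Type*} [t : TopologicalSpace M] [TopologicalSpace.MetrizableSpace M]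
    (X Y : Set M) (hdisj : Disjoint X Y) (hcover : X ∪ Y = Set.univ) :
    @TopologicalSpace.MetrizableSpace
      ↥((X ×ˢ Y) ∪ (Y ×ˢ X) ∪ {p : M × M | p.1 ∈ X ∧ p.1 = p.2})
      (@instTopologicalSpaceSubtype (M × M) _
        (@instTopologicalSpaceProd M M (michael t X) (michael t X))) := by
  obtain rfl : Y = Xᶜ := (IsCompl.compl_eq ⟨hdisj, codisjoint_iff.2 hcover⟩).symm
  exact metrizableSpace_michaelSquare X

/-- If `M` is a separable metrizable space, `M = X ∪ Y` with `X, Y` disjoint, then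
`M₂ = (X × Y) ∪ (Y × X) ∪ {(x,x) : x ∈ X}` is a metrizable subspace of
`M(X) × M(X)`. -/
theorem stmt13 {M : Type*} [t : TopologicalSpace M] [TopologicalSpace.MetrizableSpace M]
    [TopologicalSpace.SeparableSpace M]
    (X Y : Set M) (hdisj : Disjoint X Y) (hcover : X ∪ Y = Set.univ) :
    @TopologicalSpace.MetrizableSpace
      ↥((X ×ˢ Y) ∪ (Y ×ˢ X) ∪ {p : M × M | p.1 ∈ X ∧ p.1 = p.2})
      (@instTopologicalSpaceSubtype (M × M) _
        (@instTopologicalSpaceProd M M (michael t X) (michael t X))) :=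
  stmt13_general (t := t) X Y hdisj hcover
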